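/- arXiv:2511.18789 — 2 statements merged into one kernel-verified Lean document; each statement's English description precedes it below -/
import Mathlib

section
/- Let T : ℝ^m → ℝ^m be continuous, monotone (⟨T(x)−T(y), x−y⟩ ≥ 0 for all x,y), and coercive (⟨T(x), x⟩/‖x‖ → ∞ as ‖x‖ → ∞). Then T is surjective: for every g ∈ ℝ^m there exists u ∈ ℝ^m with T(u) = g. If T is additionally strictly monotone, then T is bijective. -/
/-!
Brouwer's fixed point theorem is avoided. Mollifying `T` gives smooth monotone maps `T'` uniformly
close to `T` on balls. For `δ > 0` the map `x ↦ T' x + δ • x - g` is strongly monotone and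
Lipschitz on balls, so a small gradient-type step `x ↦ x - τ • (T' x + δ • x - g)` contracts a
large ball into itself, and Banach's fixed point theorem solves `T' x + δ • x = g`. Coercivity
gives a sphere `‖y‖ = R` on which `⟪T y, y⟫ ≥ (‖g‖ + 1) R`, and monotonicity along rays keeps
these approximate solutions inside that ball. So `g` lies in the closure of the image of a compact
ball, which is closed.
-/

open RealInnerProductSpace Filter Metric MeasureTheory Function ContinuousLinearMap
open scoped Convolution NNReal

section InnerProductSpace

variable {E : Type*} [NormedAddCommGroup E] [InnerProductSpace ℝ E]

theorem norm_sub_smul_sub_sub_smul_le {S : E → E} {s : Set E} {ε τ : ℝ} {L : ℝ≥0}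
    (hS : ∀ x ∈ s, ∀ y ∈ s, ε * ‖x - y‖ ^ 2 ≤ ⟪S x - S y, x - y⟫)
    (hL : LipschitzOnWith L S s) (hτ : 0 ≤ τ) (hτL : τ * L ^ 2 ≤ ε) (hτε : τ * ε ≤ 2)
    {x y : E} (hx : x ∈ s) (hy : y ∈ s) :
    ‖(x - τ • S x) - (y - τ • S y)‖ ≤ (1 - τ * ε / 2) * ‖x - y‖ := by
  have hlip : ‖S x - S y‖ ^ 2 ≤ L ^ 2 * ‖x - y‖ ^ 2 := by
    rw [← mul_pow]; exact pow_le_pow_left₀ (norm_nonneg _) (hL.norm_sub_le hx hy) 2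
  have hdiff : (x - τ • S x) - (y - τ • S y) = (x - y) - τ • (S x - S y) := by
    rw [smul_sub]; abel
  rw [← pow_le_pow_iff_left₀ (norm_nonneg _) (by nlinarith [norm_nonneg (x - y)]) two_ne_zero,
    hdiff, norm_sub_sq_real, real_inner_smul_right, norm_smul, Real.norm_of_nonneg hτ,
    real_inner_comm]
  have hmono := mul_le_mul_of_nonneg_left (hS x hx y hy) hτ
  have hquad : τ ^ 2 * ‖S x - S y‖ ^ 2 ≤ τ * ε * ‖x - y‖ ^ 2 := calc
    τ ^ 2 * ‖S x - S y‖ ^ 2 ≤ τ * (τ * L ^ 2) * ‖x - y‖ ^ 2 := by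
      nlinarith [mul_le_mul_of_nonneg_left hlip (sq_nonneg τ)]
    _ ≤ τ * ε * ‖x - y‖ ^ 2 := by gcongr
  nlinarith [sq_nonneg (τ * ε * ‖x - y‖)]

theorem exists_mem_closedBall_eq_zero_of_strongly_monotone [CompleteSpace E] {S : E → E}
    {ε R : ℝ} {L : ℝ≥0} (hε : 0 < ε)
    (hS : ∀ x ∈ closedBall (0 : E) R, ∀ y ∈ closedBall (0 : E) R,
      ε * ‖x - y‖ ^ 2 ≤ ⟪S x - S y, x - y⟫)
    (hL : LipschitzOnWith L S (closedBall 0 R)) (hS0 : ‖S 0‖ ≤ ε * R / 2) :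
    ∃ x ∈ closedBall (0 : E) R, S x = 0 := by
  -- This step size makes `x ↦ x - τ • S x` a `(1 - τ * ε / 2)`-contraction on the ball, and
  -- `hS0` makes it map the ball into itself.
  set τ := ε / (L ^ 2 + ε ^ 2)
  have hτ : 0 < τ := by positivity
  have hτL : τ * L ^ 2 ≤ ε := by
    rw [div_mul_eq_mul_div, div_le_iff₀ (by positivity)]; nlinarith [pow_pos hε 3]
  have hτε : τ * ε ≤ 1 := by
    rw [div_mul_eq_mul_div, div_le_one (by positivity)]; nlinarith [sq_nonneg (L : ℝ)]
  set F : E → E := fun x => x - τ • S x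
  have hF : ∀ x ∈ closedBall (0 : E) R, ∀ y ∈ closedBall (0 : E) R,
      dist (F x) (F y) ≤ (1 - τ * ε / 2) * dist x y := fun x hx y hy => by
    simpa only [dist_eq_norm] using
      norm_sub_smul_sub_sub_smul_le hS hL hτ.le hτL (by linarith) hx hy
  have hR : 0 ≤ R := by nlinarith [norm_nonneg (S 0)]
  have hmaps : Set.MapsTo F (closedBall 0 R) (closedBall 0 R) := fun x hx => by
    have h0 := hF x hx 0 (mem_closedBall_self hR)
    rw [mem_closedBall] at hx ⊢
    calc dist (F x) 0 ≤ dist (F x) (F 0) + dist (F 0) 0 := dist_triangle _ _ _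
      _ ≤ (1 - τ * ε / 2) * R + τ * ‖S 0‖ := by
        gcongr
        · exact h0.trans (by gcongr; linarith)
        · simp [F, norm_smul, abs_of_pos hτ]
      _ ≤ R := by nlinarith
  have hcontr : ContractingWith (1 - τ * ε / 2).toNNReal (hmaps.restrict F _ _) := by
    refine ⟨Real.toNNReal_lt_one.mpr (by nlinarith), LipschitzWith.of_dist_le_mul fun x y => ?_⟩
    rw [Real.coe_toNNReal _ (by linarith)]
    exact hF x x.2 y y.2
  obtain ⟨x, hx, hfix, -⟩ := hcontr.exists_fixedPoint' isClosed_closedBall.isComplete hmaps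
    (mem_closedBall_self hR) (edist_ne_top _ _)
  have : τ • S x = 0 := sub_eq_self.mp hfix
  exact ⟨x, hx, (smul_eq_zero.mp this).resolve_left hτ.ne'⟩

theorem norm_le_of_monotone_of_inner_le {T : E → E} (hT : ∀ x y, 0 ≤ ⟪T x - T y, x - y⟫)
    {c R : ℝ} (hR : 0 ≤ R) (hsphere : ∀ y : E, ‖y‖ = R → c * R < ⟪T y, y⟫) {x : E}
    (hx : ⟪T x, x⟫ ≤ c * ‖x‖) : ‖x‖ ≤ R := by
  by_contra! hxR
  have hx0 : 0 < ‖x‖ := hR.trans_lt hxR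
  set y := (R / ‖x‖) • x
  have hy : ‖y‖ = R := by
    rw [norm_smul, Real.norm_of_nonneg (by positivity), div_mul_cancel₀ _ hx0.ne']
  -- `x - y` is a positive multiple of `x`, so monotonicity along the ray compares `T y` with `T x`.
  have hray : ⟪T y, x⟫ ≤ ⟪T x, x⟫ := by
    have h := hT x y
    rw [show x - y = (1 - R / ‖x‖) • x by rw [sub_smul, one_smul], real_inner_smul_right,
      inner_sub_left] at h
    have : 0 < 1 - R / ‖x‖ := by rw [sub_pos, div_lt_one hx0]; exact hxR
    nlinarith
  have : ⟪T y, y⟫ ≤ c * R := calc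
    ⟪T y, y⟫ = R / ‖x‖ * ⟪T y, x⟫ := real_inner_smul_right _ _ _
    _ ≤ R / ‖x‖ * (c * ‖x‖) := by gcongr; exact hray.trans hx
    _ = c * R := by field_simp
  exact (hsphere y hy).not_ge this

theorem exists_pos_forall_norm_eq_mul_le_inner {T : E → E}
    (hcoer : Tendsto (fun x : E => ⟪T x, x⟫ / ‖x‖) (comap norm atTop) atTop) (c : ℝ) :
    ∃ R > 0, ∀ y : E, ‖y‖ = R → c * R ≤ ⟪T y, y⟫ := by
  obtain ⟨R₀, hR₀⟩ := eventually_atTop.mp (eventually_comap.mp (hcoer.eventually_ge_atTop c))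
  refine ⟨max R₀ 1, by positivity, fun y hy => ?_⟩
  have h := hR₀ ‖y‖ (hy ▸ le_max_left _ _) y rfl
  rwa [hy, le_div_iff₀ (by positivity)] at h

theorem exists_add_smul_eq_of_monotone [ProperSpace E] {T : E → E}
    (hT : ∀ x y, 0 ≤ ⟪T x - T y, x - y⟫) (hTL : LocallyLipschitz T) {δ : ℝ} (hδ : 0 < δ)
    (g : E) : ∃ x, T x + δ • x = g := by
  set S : E → E := fun x => T x + δ • x - g
  have hSL : LocallyLipschitz S :=
    (hTL.add (lipschitzWith_smul δ).locallyLipschitz).sub (LocallyLipschitz.const g)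
  set R := 2 * ‖S 0‖ / δ
  obtain ⟨L, hL⟩ := hSL.locallyLipschitzOn.exists_lipschitzOnWith_of_compact
    (isCompact_closedBall (0 : E) R)
  have hS : ∀ x y, δ * ‖x - y‖ ^ 2 ≤ ⟪S x - S y, x - y⟫ := fun x y => by
    rw [show S x - S y = (T x - T y) + δ • (x - y) by simp only [S, smul_sub]; abel,
      inner_add_left, real_inner_smul_left, real_inner_self_eq_norm_sq]
    linarith [hT x y]
  obtain ⟨x, -, hx⟩ := exists_mem_closedBall_eq_zero_of_strongly_monotone hδ
    (fun x _ y _ => hS x y) hL (by rw [mul_div_assoc', mul_div_cancel_left₀ _ hδ.ne']; linarith)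
  exact ⟨x, sub_eq_zero.mp hx⟩

theorem exists_mem_closedBall_dist_le_of_approx [ProperSpace E] {T T' : E → E}
    (hT' : ∀ x y, 0 ≤ ⟪T' x - T' y, x - y⟫) (hT'L : LocallyLipschitz T') {g : E} {R η : ℝ}
    (hR : 0 < R) (hη : 0 < η) (hη1 : η < 1)
    (hsphere : ∀ y : E, ‖y‖ = R → (‖g‖ + 1) * R ≤ ⟪T y, y⟫)
    (happrox : ∀ y ∈ closedBall (0 : E) R, dist (T' y) (T y) ≤ η) :
    ∃ x ∈ closedBall (0 : E) R, dist (T x) g ≤ 2 * η := by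
  obtain ⟨x, hx⟩ := exists_add_smul_eq_of_monotone hT' hT'L (div_pos hη hR) g
  have hsphere' : ∀ y : E, ‖y‖ = R → ‖g‖ * R < ⟪T' y, y⟫ := fun y hy => by
    have h : ⟪T y - T' y, y⟫ ≤ η * R := by
      refine (real_inner_le_norm _ _).trans ?_
      rw [hy, ← dist_eq_norm, dist_comm]
      gcongr
      exact happrox y (mem_closedBall_zero_iff.mpr hy.le)
    rw [inner_sub_left] at h
    nlinarith [hsphere y hy]
  have hxR : ‖x‖ ≤ R := by
    refine norm_le_of_monotone_of_inner_le hT' hR.le hsphere' ?_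
    rw [eq_sub_of_add_eq hx, inner_sub_left, real_inner_smul_left, real_inner_self_eq_norm_sq]
    nlinarith [real_inner_le_norm g x, div_pos hη hR, sq_nonneg ‖x‖]
  have hxR' := mem_closedBall_zero_iff.mpr hxR
  refine ⟨x, hxR', ?_⟩
  calc dist (T x) g = ‖(T x - T' x) - (η / R) • x‖ := by
        rw [dist_eq_norm, ← hx]; congr 1; abel
    _ ≤ η + η / R * R := by
        refine (norm_sub_le _ _).trans ?_
        rw [norm_smul, Real.norm_of_nonneg (div_pos hη hR).le, ← dist_eq_norm, dist_comm]
        gcongr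
        exact happrox x hxR'
    _ = 2 * η := by field_simp; ring

end InnerProductSpace

section Mollification

variable {E : Type*} [NormedAddCommGroup E] [InnerProductSpace ℝ E] [MeasurableSpace E]

theorem inner_convolution_sub_convolution_nonneg [CompleteSpace E] [OpensMeasurableSpace E]
    {μ : Measure E} [IsFiniteMeasureOnCompacts μ] {φ : E → ℝ} (hφ : Continuous φ)
    (hφc : HasCompactSupport φ) (hφ0 : ∀ t, 0 ≤ φ t) {T : E → E} (hTc : Continuous T)
    (hT : ∀ x y, 0 ≤ ⟪T x - T y, x - y⟫) (x y : E) :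
    0 ≤ ⟪(φ ⋆[lsmul ℝ ℝ, μ] T) x - (φ ⋆[lsmul ℝ ℝ, μ] T) y, x - y⟫ := by
  have hint : ∀ z, Integrable (fun t => φ t • T (z - t)) μ := fun z =>
    (hφ.smul (hTc.comp (continuous_const.sub continuous_id))).integrable_of_hasCompactSupport
      (hφc.smul_right)
  simp only [convolution_def, lsmul_apply]
  rw [← integral_sub (hint x) (hint y), real_inner_comm,
    ← integral_inner (f := fun t => φ t • T (x - t) - φ t • T (y - t)) ((hint x).sub (hint y))]
  refine integral_nonneg fun t => ?_
  have := hT (x - t) (y - t)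
  rw [sub_sub_sub_cancel_right, real_inner_comm] at this
  rw [← smul_sub, real_inner_smul_right]
  exact mul_nonneg (hφ0 t) this

variable [BorelSpace E] [FiniteDimensional ℝ E] {F : Type*} [NormedAddCommGroup F]
  [NormedSpace ℝ F] [CompleteSpace F]

theorem exists_pos_forall_dist_normed_convolution_le (μ : Measure E) [μ.IsAddHaarMeasure]
    {T : E → F} (hT : Continuous T) (R : ℝ) {η : ℝ} (hη : 0 < η) :
    ∃ r > 0, ∀ φ : ContDiffBump (0 : E), φ.rOut ≤ r → ∀ y ∈ closedBall (0 : E) R,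
      dist ((φ.normed μ ⋆[lsmul ℝ ℝ, μ] T) y) (T y) ≤ η := by
  obtain ⟨r, hr, hTr⟩ := uniformContinuousOn_iff_le.mp
    ((isCompact_closedBall (0 : E) (R + 1)).uniformContinuousOn_of_continuous hT.continuousOn) η hη
  refine ⟨min r 1, by positivity, fun φ hφ y hy => ?_⟩
  refine φ.dist_normed_convolution_le hT.aestronglyMeasurable fun x hx => ?_
  have hxy : dist x y ≤ min r 1 := (mem_ball.mp hx).le.trans hφ
  refine hTr x ?_ y (closedBall_subset_closedBall (by linarith) hy) (hxy.trans (min_le_left _ _))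
  rw [mem_closedBall] at hy ⊢
  linarith [dist_triangle x y 0, min_le_right r 1]

end Mollification

section BrowderMinty

variable {E : Type*} [NormedAddCommGroup E] [InnerProductSpace ℝ E] [FiniteDimensional ℝ E]
  {T : E → E}

theorem mem_closure_image_closedBall_of_monotone (hcont : Continuous T)
    (hmono : ∀ x y, 0 ≤ ⟪T x - T y, x - y⟫) {g : E} {R : ℝ} (hR : 0 < R)
    (hsphere : ∀ y : E, ‖y‖ = R → (‖g‖ + 1) * R ≤ ⟪T y, y⟫) :
    g ∈ closure (T '' closedBall 0 R) := by
  borelize E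
  rw [Metric.mem_closure_iff]
  intro η hη
  have hη' : 0 < min (η / 3) (1 / 2) := by positivity
  obtain ⟨r, hr, happrox⟩ :=
    exists_pos_forall_dist_normed_convolution_le Measure.addHaar hcont R hη'
  let φ : ContDiffBump (0 : E) := ⟨r / 2, r, half_pos hr, half_lt_self hr⟩
  obtain ⟨x, hx, hTx⟩ := exists_mem_closedBall_dist_le_of_approx
    (inner_convolution_sub_convolution_nonneg φ.continuous_normed φ.hasCompactSupport_normed
      φ.nonneg_normed hcont hmono)
    (φ.hasCompactSupport_normed.contDiff_convolution_left _ φ.contDiff_normed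
      hcont.locallyIntegrable).locallyLipschitz
    hR hη' ((min_le_right _ _).trans_lt (by norm_num)) hsphere (happrox φ le_rfl)
  refine ⟨T x, ⟨x, hx, rfl⟩, ?_⟩
  rw [dist_comm]
  linarith [min_le_left (η / 3) (1 / 2)]

theorem surjective_of_monotone_of_coercive (hcont : Continuous T)
    (hmono : ∀ x y, 0 ≤ ⟪T x - T y, x - y⟫)
    (hcoer : Tendsto (fun x : E => ⟪T x, x⟫ / ‖x‖) (comap norm atTop) atTop) :
    Surjective T := by
  intro g
  obtain ⟨R, hR, hsphere⟩ := exists_pos_forall_norm_eq_mul_le_inner hcoer (‖g‖ + 1)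
  obtain ⟨x, -, hx⟩ := ((isCompact_closedBall (0 : E) R).image hcont).isClosed.closure_subset
    (mem_closure_image_closedBall_of_monotone hcont hmono hR hsphere)
  exact ⟨x, hx⟩

end BrowderMinty

theorem browder_minty_finite_dim {m : ℕ}
    (T : EuclideanSpace ℝ (Fin m) → EuclideanSpace ℝ (Fin m))
    (hcont : Continuous T)
    (hmono : ∀ x y, 0 ≤ ⟪T x - T y, x - y⟫)
    (hcoer : Tendsto (fun x : EuclideanSpace ℝ (Fin m) => ⟪T x, x⟫ / ‖x‖)
      (comap norm atTop) atTop) :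
    Function.Surjective T ∧
      ((∀ x y, x ≠ y → 0 < ⟪T x - T y, x - y⟫) → Function.Bijective T) := by
  have hsurj := surjective_of_monotone_of_coercive hcont hmono hcoer
  refine ⟨hsurj, fun hstrict => ⟨fun x y hxy => ?_, hsurj⟩⟩
  by_contra hne
  simpa [hxy] using hstrict x y hne
end

section
/- Let ℓ(·,y) be β-smooth and differentiable for each y, let f̂ satisfy the ERM first-order condition (1/n)∑ᵢ ⟨∇₁ℓ(f̂(xᵢ), yᵢ), f(xᵢ) − f̂(xᵢ)⟩ = 0 for all f ∈ F, and suppose y₁⋄,…,yₙ⋄ satisfy ∇₁ℓ(f̂(xᵢ), yᵢ⋄) = ∇₁ℓ(f̂(xᵢ), yᵢ) − 2ρε_i g̃ᵢ where g̃ᵢ = ∇₁ℓ(f̂(xᵢ), yᵢ) and εᵢ ∈ {−1,+1}. Then for every f ∈ F: (1/n)∑ᵢ ℓ(f(xᵢ), yᵢ⋄) − (1/n)∑ᵢ ℓ(f̂(xᵢ), yᵢ⋄) ≤ −(2ρ/n)∑ᵢ ⟨εᵢ g̃ᵢ, f(xᵢ) − f̂(xᵢ)⟩ + (β/2)·(1/n)∑ᵢ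 ‖f(xᵢ) − f̂(xᵢ)‖². -/
open RealInnerProductSpace

theorem wild_refit_basic_inequality {X : Type*} {d n : ℕ}
    (F : Set (X → EuclideanSpace ℝ (Fin d)))
    (x : Fin n → X) (y ydia : Fin n → EuclideanSpace ℝ (Fin d))
    (ε : Fin n → ℝ) (hε : ∀ i, ε i = 1 ∨ ε i = -1)
    (ρ : ℝ) (hρ : 0 < ρ) (β : ℝ)
    (ℓ : EuclideanSpace ℝ (Fin d) → EuclideanSpace ℝ (Fin d) → ℝ)
    (G : EuclideanSpace ℝ (Fin d) → EuclideanSpace ℝ (Fin d) → EuclideanSpace ℝ (Fin d))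
    -- β-smoothness of the loss in its first argument
    (hsmooth : ∀ z z' yv, ℓ z' yv ≤ ℓ z yv + ⟪G z yv, z' - z⟫ + β / 2 * ‖z' - z‖ ^ 2)
    (fhat : X → EuclideanSpace ℝ (Fin d))
    -- ERM first-order condition
    (hfoc : ∀ f ∈ F,
      (1 / (n : ℝ)) * ∑ i, ⟪G (fhat (x i)) (y i), f (x i) - fhat (x i)⟫ = 0)
    -- wild responses: ∇₁ℓ(f̂(xᵢ), yᵢ⋄) = g̃ᵢ − 2ρεᵢ g̃ᵢ
    (hwild : ∀ i, G (fhat (x i)) (ydia i) =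
      G (fhat (x i)) (y i) - (2 * ρ * ε i) • G (fhat (x i)) (y i)) :
    ∀ f ∈ F,
      (1 / (n : ℝ)) * ∑ i, ℓ (f (x i)) (ydia i) -
          (1 / (n : ℝ)) * ∑ i, ℓ (fhat (x i)) (ydia i) ≤
        -((2 * ρ / (n : ℝ)) * ∑ i, ⟪ε i • G (fhat (x i)) (y i), f (x i) - fhat (x i)⟫) +
          β / 2 * ((1 / (n : ℝ)) * ∑ i, ‖f (x i) - fhat (x i)‖ ^ 2) := by
  intro f hf
  have key : ∀ i ∈ Finset.univ, ℓ (f (x i)) (ydia i) - ℓ (fhat (x i)) (ydia i) ≤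
      ⟪G (fhat (x i)) (y i), f (x i) - fhat (x i)⟫
        - 2 * ρ * (ε i * ⟪G (fhat (x i)) (y i), f (x i) - fhat (x i)⟫)
        + β / 2 * ‖f (x i) - fhat (x i)‖ ^ 2 := by
    intro i _
    have h := hsmooth (fhat (x i)) (f (x i)) (ydia i)
    rw [hwild i, inner_sub_left, real_inner_smul_left] at h
    nlinarith [h]
  have hsum := Finset.sum_le_sum key
  rw [Finset.sum_sub_distrib] at hsum
  have hsplit : ∑ i, (⟪G (fhat (x i)) (y i), f (x i) - fhat (x i)⟫
        - 2 * ρ * (ε i * ⟪G (fhat (x i)) (y i), f (x i) - fhat (x i)⟫)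
        + β / 2 * ‖f (x i) - fhat (x i)‖ ^ 2)
      = (∑ i, ⟪G (fhat (x i)) (y i), f (x i) - fhat (x i)⟫)
        - 2 * ρ * (∑ i, ε i * ⟪G (fhat (x i)) (y i), f (x i) - fhat (x i)⟫)
        + β / 2 * ∑ i, ‖f (x i) - fhat (x i)‖ ^ 2 := by
    rw [Finset.sum_add_distrib, Finset.sum_sub_distrib, Finset.mul_sum, Finset.mul_sum]
  rw [hsplit] at hsum
  have hnn : (0:ℝ) ≤ 1 / (n:ℝ) := by positivity
  have hmul := mul_le_mul_of_nonneg_left hsum hnn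
  have h1 := hfoc f hf
  simp only [real_inner_smul_left]
  ring_nf at hmul h1 ⊢
  linarith [hmul, h1]
end
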